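/- Let V be a nonlocal vertex algebra and (W, Y_W) a (left) quasi V-module-at-infinity. Then Y_W(𝒟v, x) = (d/dx) Y_W(v, x) for all v ∈ V, where 𝒟 is the canonical operator of V defined by 𝒟v = v_{−2}𝟏. -/

import Mathlib

/-- The generalized binomial coefficient `C(a, k) = a(a−1)⋯(a−k+1)/k!` for `a ∈ ℤ`. -/
noncomputable def intBinom (a : ℤ) (k : ℕ) : ℂ :=
  (∏ j ∈ Finset.range k, ((a : ℂ) - (j : ℂ))) / (k.factorial : ℂ)

/-- The coefficient of `x₁^a x₂^b` in `p(x₁,x₂) Y_W(u,x₁)Y_W(v,x₂)` applied to `w`,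
where `p ∈ ℂ[x₁][x₂]` is encoded as a polynomial in `x₁` (outer) with coefficients
polynomials in `x₂` (inner), and `Y_W(u,x) = Σ_n (Y_W u n) x^{−n−1}`. -/
noncomputable def prodCoef {V W : Type} [AddCommGroup V] [Module ℂ V]
    [AddCommGroup W] [Module ℂ W]
    (YW : V → ℤ → W →ₗ[ℂ] W) (p : Polynomial (Polynomial ℂ)) (u v : V)
    (a b : ℤ) (w : W) : W :=
  ∑ i ∈ p.support, ∑ j ∈ (p.coeff i).support,
    ((p.coeff i).coeff j) • YW u ((i : ℤ) - a - 1) (YW v ((j : ℤ) - b - 1) w)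

/-- The coefficient of `x₀^c x₂^l` in `p(x₂+x₀,x₂) Y_W(Y(u,x₀)v, x₂)` applied to `w`,
with `(x₂+x₀)^i` expanded by the binomial theorem (nonnegative powers of `x₀`). -/
noncomputable def iterCoef {V W : Type} [AddCommGroup V] [Module ℂ V]
    [AddCommGroup W] [Module ℂ W]
    (Y : V → ℤ → V →ₗ[ℂ] V) (YW : V → ℤ → W →ₗ[ℂ] W)
    (p : Polynomial (Polynomial ℂ)) (u v : V) (c l : ℤ) (w : W) : W :=
  ∑ i ∈ p.support, ∑ j ∈ (p.coeff i).support, ∑ s ∈ Finset.range (i + 1),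
    (((p.coeff i).coeff j) * (i.choose s : ℂ)) •
      YW (Y u ((s : ℤ) - c - 1) v) ((i : ℤ) + (j : ℤ) - (s : ℤ) - l - 1) w


/-!
Apply the quasi-module axiom to the pair `(v, 𝟏)`. Since `Y_W(𝟏, x₂) = id_W`, it reads
`q(x₀,x₂) Y_W(Y(v,x₀)𝟏, x₂) = q(x₀,x₂) Y_W(v, x₂ + x₀)` with `q(x₀,x₂) = p(x₂ + x₀, x₂) ≠ 0`,
and by the creation property both sides lie in `W((x₂⁻¹))[[x₀]]`. A nonzero element of
`ℂ[x₂][[x₀]]` is not a zero divisor there, so `Y_W(Y(v,x₀)𝟏, x₂) = Y_W(v, x₂ + x₀)`, and the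
coefficients of `x₀¹` give `Y_W(v₋₂𝟏, x₂) = d/dx₂ Y_W(v, x₂)`.
-/

open Polynomial

lemma intBinom_eq_choose (a : ℤ) (k : ℕ) : intBinom a k = Ring.choose (a : ℂ) k := by
  rw [Ring.choose_eq_smul, intBinom, smul_eq_mul, ← descPochhammer_eval_eq_prod_range,
    ← aeval_eq_smeval, ← descPochhammer_map (algebraMap ℤ ℂ), aeval_def, eval_map,
    div_eq_inv_mul]

lemma intBinom_one (a : ℤ) : intBinom a 1 = a := by
  rw [intBinom_eq_choose, Ring.choose_one_right]

lemma sum_choose_mul_intBinom (a : ℤ) (i c : ℕ) :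
    ∑ s ∈ Finset.range (c + 1), (i.choose s : ℂ) * intBinom a (c - s) = intBinom (a + i) c := by
  simp only [intBinom_eq_choose, Int.cast_add, Int.cast_natCast]
  rw [add_comm (a : ℂ), Ring.add_choose_eq _ (Commute.all _ _),
    Finset.Nat.sum_antidiagonal_eq_sum_range_succ_mk]
  simp [Ring.choose_natCast]

lemma Finset.sum_range_succ_eq_sum_range_succ {M : Type*} [AddCommMonoid M] {f g : ℕ → M}
    {c i : ℕ} (hfg : ∀ s ≤ c, s ≤ i → f s = g s) (hf : ∀ s ≤ c, i < s → f s = 0)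
    (hg : ∀ s ≤ i, c < s → g s = 0) :
    ∑ s ∈ range (c + 1), f s = ∑ s ∈ range (i + 1), g s := by
  have hmin : ∀ {k}, min c i ≤ k → range (min c i + 1) ⊆ range (k + 1) := fun h =>
    range_subset_range.mpr (by omega)
  rw [← sum_subset (hmin (min_le_left c i)) fun s hs hs' => ?_,
    ← sum_subset (hmin (min_le_right c i)) fun s hs hs' => ?_]
  · exact sum_congr rfl fun s hs => hfg s (by simp at hs; omega) (by simp at hs; omega)
  all_goals simp only [mem_range] at hs hs'
  · exact hg s (by omega) (by omega)
  · exact hf s (by omega) (by omega)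

section PolyConv

variable {W : Type*} [AddCommGroup W] [Module ℂ W]

/-- For `g l` the coefficient of `x^l` in a series `g(x) ∈ W((x⁻¹))`, `polyConv g l r` is the
coefficient of `x^l` in `r(x) g(x)`. -/
noncomputable def polyConv (g : ℤ → W) (l : ℤ) : ℂ[X] →ₗ[ℂ] W :=
  lsum fun j => LinearMap.smulRight LinearMap.id (g (l - j))

lemma polyConv_apply (g : ℤ → W) (l : ℤ) (r : ℂ[X]) :
    polyConv g l r = ∑ j ∈ r.support, r.coeff j • g (l - j) := rfl

lemma polyConv_monomial (g : ℤ → W) (l : ℤ) (k : ℕ) (a : ℂ) :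
    polyConv g l (monomial k a) = a • g (l - k) := by
  simp [polyConv, lsum_apply, sum_monomial_index]

lemma polyConv_zero_left (l : ℤ) (r : ℂ[X]) : polyConv (0 : ℤ → W) l r = 0 := by
  simp [polyConv_apply]

lemma polyConv_sub_left (g h : ℤ → W) (l : ℤ) (r : ℂ[X]) :
    polyConv (g - h) l r = polyConv g l r - polyConv h l r := by
  simp [polyConv_apply, smul_sub]

/-- The top coefficient of `r g` is the product of the top coefficients of `r` and `g`. -/
lemma eq_zero_of_polyConv_eq_zero {r : ℂ[X]} (hr : r ≠ 0) {g : ℤ → W}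
    (hg : ∃ N, ∀ l, N ≤ l → g l = 0) (h : ∀ l, polyConv g l r = 0) : g = 0 := by
  by_contra hne
  obtain ⟨l₀, hl₀, hmax⟩ := Int.exists_greatest_of_bdd (P := fun l => g l ≠ 0)
    (hg.imp fun N hN l hl => by_contra fun hlN => hl (hN l (by omega)))
    (by simpa [funext_iff] using hne)
  have htop := h (l₀ + r.natDegree)
  rw [polyConv_apply, Finset.sum_eq_single r.natDegree, add_sub_cancel_right] at htop
  · exact (smul_ne_zero (leadingCoeff_ne_zero.mpr hr) hl₀) htop
  · intro j hj hjne
    have hjlt : j < r.natDegree := lt_of_le_of_ne (le_natDegree_of_mem_supp j hj) hjne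
    rw [not_not.mp fun hgj => absurd (hmax _ hgj) (by omega), smul_zero]
  · exact fun hnot => absurd (natDegree_mem_support_of_nonzero hr) hnot

/-- For `G c l` the coefficient of `x₀^c x^l` in `G ∈ W((x⁻¹))[[x₀]]` and `q s` the coefficient of
`x₀^s` in `q ∈ ℂ[x][[x₀]]`, `seriesConv q G c l` is the coefficient of `x₀^c x^l` in `q G`. -/
noncomputable def seriesConv (q : ℕ → ℂ[X]) (G : ℕ → ℤ → W) (c : ℕ) (l : ℤ) : W :=
  ∑ s ∈ Finset.range (c + 1), polyConv (G (c - s)) l (q s)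

lemma seriesConv_sub (q : ℕ → ℂ[X]) (G H : ℕ → ℤ → W) (c : ℕ) (l : ℤ) :
    seriesConv q (G - H) c l = seriesConv q G c l - seriesConv q H c l := by
  simp only [seriesConv, Pi.sub_apply, ← Finset.sum_sub_distrib, ← polyConv_sub_left]

/-- Induction on the `x₀`-degree of `G`; the lowest nonzero `x₀`-coefficient of `q` does the
cancelling. -/
lemma eq_zero_of_seriesConv_eq_zero {q : ℕ → ℂ[X]} (hq : ∃ s, q s ≠ 0) {G : ℕ → ℤ → W}
    (hG : ∀ c, ∃ N, ∀ l, N ≤ l → G c l = 0) (h : ∀ c l, seriesConv q G c l = 0) : G = 0 := by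
  classical
  funext c
  induction c using Nat.strong_induction_on with
  | _ c ih =>
    refine eq_zero_of_polyConv_eq_zero (Nat.find_spec hq) (hG c) fun l => ?_
    have hc := h (c + Nat.find hq) l
    rwa [seriesConv, Finset.sum_eq_single (Nat.find hq), Nat.add_sub_cancel] at hc
    · intro s hs hne
      rcases lt_or_gt_of_ne hne with hlt | hgt
      · rw [not_not.mp (Nat.find_min hq hlt), map_zero]
      · rw [ih _ (by simp at hs; omega)]
        exact polyConv_zero_left l _
    · simp

end PolyConv

section Substitution

variable {W : Type*} [AddCommGroup W] [Module ℂ W]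

/-- The coefficient of `x₀^s` in `p(x₂ + x₀, x₂)`, as a polynomial in `x₂`. -/
noncomputable def substCoeff (p : ℂ[X][X]) (s : ℕ) : ℂ[X] :=
  ∑ i ∈ p.support, ∑ j ∈ (p.coeff i).support,
    monomial (i - s + j) ((i.choose s : ℂ) * (p.coeff i).coeff j)

lemma substCoeff_natDegree (p : ℂ[X][X]) : substCoeff p p.natDegree = p.leadingCoeff := by
  rw [substCoeff, Finset.sum_eq_single p.natDegree]
  · simp only [Nat.choose_self, Nat.cast_one, one_mul, Nat.sub_self, zero_add]
    exact (as_sum_support _).symm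
  · intro i hi hne
    have hlt : i < p.natDegree := lt_of_le_of_ne (le_natDegree_of_mem_supp i hi) hne
    simp [Nat.choose_eq_zero_of_lt hlt]
  · intro h
    simp [notMem_support_iff.mp h]

lemma exists_substCoeff_ne_zero {p : ℂ[X][X]} (hp : p ≠ 0) : ∃ s, substCoeff p s ≠ 0 :=
  ⟨p.natDegree, by rwa [substCoeff_natDegree, Ne, leadingCoeff_eq_zero]⟩

lemma seriesConv_substCoeff (p : ℂ[X][X]) (G : ℕ → ℤ → W) (c : ℕ) (l : ℤ) :
    seriesConv (substCoeff p) G c l = ∑ i ∈ p.support, ∑ j ∈ (p.coeff i).support,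
      ∑ s ∈ Finset.range (c + 1),
        ((i.choose s : ℂ) * (p.coeff i).coeff j) • G (c - s) (l - (i - s + j : ℕ)) := by
  simp only [seriesConv, substCoeff, map_sum, polyConv_monomial]
  rw [Finset.sum_comm]
  exact Finset.sum_congr rfl fun i _ => Finset.sum_comm

end Substitution

section ModuleAtInfinity

variable {V W : Type} [AddCommGroup V] [Module ℂ V] [AddCommGroup W] [Module ℂ W]

lemma iterCoef_eq_seriesConv (Y : V → ℤ → V →ₗ[ℂ] V) {YW : V → ℤ → W →ₗ[ℂ] W}
    (hYW0 : ∀ n, YW 0 n = 0) (p : ℂ[X][X]) {u v : V} (huv : ∀ n, 0 ≤ n → Y u n v = 0)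
    (c : ℕ) (l : ℤ) (w : W) :
    iterCoef Y YW p u v c l w =
      seriesConv (substCoeff p) (fun c l => YW (Y u (-c - 1) v) (-l - 1) w) c l := by
  rw [seriesConv_substCoeff, iterCoef]
  refine Finset.sum_congr rfl fun i _ => Finset.sum_congr rfl fun j _ => ?_
  symm
  apply Finset.sum_range_succ_eq_sum_range_succ
  · intro s hsc hsi
    rw [mul_comm, show -((c - s : ℕ) : ℤ) - 1 = s - c - 1 by omega,
      show -(l - (i - s + j : ℕ)) - 1 = (i : ℤ) + j - s - l - 1 by omega]
  · intro s _ his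
    rw [Nat.choose_eq_zero_of_lt his, Nat.cast_zero, zero_mul, zero_smul]
  · intro s _ hcs
    rw [huv _ (by omega), hYW0, LinearMap.zero_apply, smul_zero]

lemma prodCoef_vacuum {YW : V → ℤ → W →ₗ[ℂ] W} {one : V}
    (hYWvac : ∀ n w, YW one n w = if n = -1 then w else 0) (p : ℂ[X][X]) (u : V) (a b : ℤ)
    (w : W) :
    prodCoef YW p u one a b w = ∑ i ∈ p.support, ∑ j ∈ (p.coeff i).support,
      if (j : ℤ) = b then (p.coeff i).coeff j • YW u (i - a - 1) w else 0 := by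
  refine Finset.sum_congr rfl fun i _ => Finset.sum_congr rfl fun j _ => ?_
  rw [hYWvac]
  split_ifs <;> first | rfl | omega | simp

lemma finsum_intBinom_smul_prodCoef_vacuum {YW : V → ℤ → W →ₗ[ℂ] W} {one : V}
    (hYWvac : ∀ n w, YW one n w = if n = -1 then w else 0) (p : ℂ[X][X]) (u : V) (c : ℕ)
    (l : ℤ) (w : W) :
    ∑ᶠ m : ℤ, intBinom m c • prodCoef YW p u one m (l + c - m) w =
      seriesConv (substCoeff p) (fun c l => intBinom (c + l) c • YW u (-l - 1 - c) w) c l := by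
  set f : ℕ → ℕ → ℤ → W := fun i j m =>
    intBinom m c • if (j : ℤ) = l + c - m then (p.coeff i).coeff j • YW u (i - m - 1) w else 0
  have hf : ∀ i j, ∑ᶠ m, f i j m =
      intBinom (l + c - j) c • (p.coeff i).coeff j • YW u (i + j - l - c - 1) w := by
    intro i j
    rw [finsum_eq_single _ (l + c - j) fun m hm => by simp [f, show (j : ℤ) ≠ l + c - m by omega],
      show (i : ℤ) + j - l - c - 1 = i - (l + c - j) - 1 by ring]
    simp [f]
  have hf_fin : ∀ i j, (f i j).HasFiniteSupport := fun i j =>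
    (Set.finite_singleton (l + c - j)).subset fun m hm => by
      by_contra hne
      rw [Set.mem_singleton_iff] at hne
      exact hm (by simp only [f]; rw [if_neg (by omega), smul_zero])
  simp only [prodCoef_vacuum hYWvac, Finset.smul_sum]
  rw [finsum_sum_comm _ _ fun i _ => Function.HasFiniteSupport.sum (hf_fin i) _,
    seriesConv_substCoeff]
  refine Finset.sum_congr rfl fun i _ => ?_
  rw [finsum_sum_comm _ _ fun j _ => hf_fin i j]
  refine Finset.sum_congr rfl fun j _ => ?_
  rw [hf, show l + c - j = l + c - i - j + i by ring, ← sum_choose_mul_intBinom, Finset.sum_smul]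
  refine Finset.sum_congr rfl fun s hs => ?_
  rcases le_or_gt s i with hsi | his
  · rw [Finset.mem_range] at hs
    rw [show ((c - s : ℕ) : ℤ) + (l - (i - s + j : ℕ)) = l + c - i - j by omega,
      show -(l - (i - s + j : ℕ)) - 1 - (c - s : ℕ) = (i : ℤ) + j - l - c - 1 by omega,
      smul_smul, smul_smul, mul_right_comm]
  · simp [Nat.choose_eq_zero_of_lt his]

end ModuleAtInfinity

theorem stmt_12_general (V W : Type) [AddCommGroup V] [Module ℂ V] [AddCommGroup W] [Module ℂ W]
    (Y : V → ℤ → V →ₗ[ℂ] V) (one : V)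
    (hcre0 : ∀ (v : V) (n : ℤ), 0 ≤ n → Y v n one = 0)
    (YW : V → ℤ → W →ₗ[ℂ] W)
    (hYWadd : ∀ (n : ℤ) (u u' : V), YW (u + u') n = YW u n + YW u' n)
    (hYWtrunc : ∀ (v : V) (w : W), ∃ N : ℤ, ∀ n : ℤ, n ≤ N → YW v n w = 0)
    (hYWvac : ∀ (n : ℤ) (w : W), YW one n w = if n = -1 then w else 0)
    (hqm : ∀ u v : V, ∃ p : Polynomial (Polynomial ℂ), p ≠ 0 ∧
      (∀ w : W, ∃ N : ℤ, ∀ a b : ℤ, (N ≤ a ∨ N ≤ b) → prodCoef YW p u v a b w = 0) ∧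
      (∀ (c l : ℤ) (w : W), iterCoef Y YW p u v c l w =
        if 0 ≤ c then ∑ᶠ m : ℤ, intBinom m c.toNat • prodCoef YW p u v m (l + c - m) w
        else 0)) :
    ∀ (v : V) (n : ℤ) (w : W),
      YW (Y v (-2) one) n w = (-(n : ℂ)) • YW v (n - 1) w := by
  intro v n w
  obtain ⟨p, hp, -, hsubst⟩ := hqm v one
  have hYW0 (m : ℤ) : YW 0 m = 0 := (AddMonoidHom.mk' (YW · m) (hYWadd m)).map_zero
  -- The coefficients of `x₀^c x₂^l` in `Y_W(Y(v,x₀)𝟏, x₂) w` and in `Y_W(v, x₂ + x₀) w` agree.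
  have hF : ((fun (c : ℕ) (l : ℤ) => YW (Y v (-c - 1) one) (-l - 1) w) -
      fun (c : ℕ) (l : ℤ) => intBinom (c + l) c • YW v (-l - 1 - c) w) = 0 := by
    refine eq_zero_of_seriesConv_eq_zero (exists_substCoeff_ne_zero hp) (fun c => ?_)
      fun c l => ?_
    · obtain ⟨N₁, hN₁⟩ := hYWtrunc (Y v (-c - 1) one) w
      obtain ⟨N₂, hN₂⟩ := hYWtrunc v w
      refine ⟨max (-N₁ - 1) (-N₂ - c - 1), fun l hl => ?_⟩
      rw [Pi.sub_apply, Pi.sub_apply, hN₁ (-l - 1) (by omega), hN₂ (-l - 1 - c) (by omega),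
        smul_zero, sub_zero]
    · rw [seriesConv_sub, ← iterCoef_eq_seriesConv Y hYW0 p (hcre0 v),
        ← finsum_intBinom_smul_prodCoef_vacuum hYWvac, hsubst, if_pos (by positivity),
        Int.toNat_natCast, sub_self]
  have h1 := congrFun (congrFun hF 1) (-n - 1)
  rw [Pi.sub_apply, Pi.sub_apply, Pi.zero_apply, Pi.zero_apply, sub_eq_zero, intBinom_one] at h1
  convert h1 using 5 <;> push_cast <;> ring

/-- Let `V` be a nonlocal vertex algebra (vacuum `one`, vertex map
`Y(v,x) = Σ_n (Y v n) x^{−n−1}` with truncation, vacuum and creation properties, and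
weak associativity, stated coefficientwise), and let `(W, Y_W)` be a (left) quasi
`V`-module-at-infinity: `Y_W(𝟏,x) = id_W` and for all `u,v ∈ V` there is a nonzero
polynomial `p(x₁,x₂)` with `p(x₁,x₂)Y_W(u,x₁)Y_W(v,x₂) ∈ Hom(W,W((x₁⁻¹,x₂⁻¹)))` and
`p(x₂+x₀,x₂)Y_W(Y(u,x₀)v,x₂) = (p(x₁,x₂)Y_W(u,x₁)Y_W(v,x₂))|_{x₁=x₂+x₀}`.
Then `Y_W(𝒟v, x) = (d/dx)Y_W(v,x)` for all `v`, where `𝒟v = v_{−2}𝟏`; i.e.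
`(Y_W (𝒟v))_n = −n (Y_W v)_{n−1}` coefficientwise. -/
theorem stmt_12 (V W : Type) [AddCommGroup V] [Module ℂ V] [AddCommGroup W] [Module ℂ W]
    (Y : V → ℤ → V →ₗ[ℂ] V) (one : V)
    (hYadd : ∀ (n : ℤ) (u u' : V), Y (u + u') n = Y u n + Y u' n)
    (hYsmul : ∀ (n : ℤ) (c : ℂ) (u : V), Y (c • u) n = c • Y u n)
    (hYtrunc : ∀ u v : V, ∃ N : ℤ, ∀ n : ℤ, N ≤ n → Y u n v = 0)
    (hvac : ∀ (n : ℤ) (v : V), Y one n v = if n = -1 then v else 0)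
    (hcre0 : ∀ (v : V) (n : ℤ), 0 ≤ n → Y v n one = 0)
    (hcre1 : ∀ v : V, Y v (-1) one = v)
    (hassoc : ∀ u v w : V, ∃ l : ℕ, ∀ α β : ℤ,
      (∑ᶠ s : ℕ, intBinom (α + s) s • Y u ((l : ℤ) - 1 - s - α) (Y v ((s : ℤ) - β - 1) w))
        = ∑ s ∈ Finset.range (l + 1),
            (l.choose s : ℂ) • Y (Y u ((l : ℤ) - s - α - 1) v) ((s : ℤ) - β - 1) w)
    (YW : V → ℤ → W →ₗ[ℂ] W)
    (hYWadd : ∀ (n : ℤ) (u u' : V), YW (u + u') n = YW u n + YW u' n)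
    (hYWsmul : ∀ (n : ℤ) (c : ℂ) (u : V), YW (c • u) n = c • YW u n)
    (hYWtrunc : ∀ (v : V) (w : W), ∃ N : ℤ, ∀ n : ℤ, n ≤ N → YW v n w = 0)
    (hYWvac : ∀ (n : ℤ) (w : W), YW one n w = if n = -1 then w else 0)
    (hqm : ∀ u v : V, ∃ p : Polynomial (Polynomial ℂ), p ≠ 0 ∧
      (∀ w : W, ∃ N : ℤ, ∀ a b : ℤ, (N ≤ a ∨ N ≤ b) → prodCoef YW p u v a b w = 0) ∧
      (∀ (c l : ℤ) (w : W), iterCoef Y YW p u v c l w =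
        if 0 ≤ c then ∑ᶠ m : ℤ, intBinom m c.toNat • prodCoef YW p u v m (l + c - m) w
        else 0)) :
    ∀ (v : V) (n : ℤ) (w : W),
      YW (Y v (-2) one) n w = (-(n : ℂ)) • YW v (n - 1) w :=
  stmt_12_general V W Y one hcre0 YW hYWadd hYWtrunc hYWvac hqm
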